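/- arXiv:1409.6879 — 3 statements merged into one kernel-verified Lean document; each statement's English description precedes it below -/
import Mathlib

section
/- If α and β are distinct partitions of n into distinct parts, then the partitions 2[α] and 2[β] of 2n are incomparable in the dominance order: neither 2[α] ⊴ 2[β] nor 2[β] ⊴ 2[α] holds. -/
/-!
Let `j` be the first index at which `α` and `β` differ, say `β j < α j` (if they agree on all
common indices, equality of the sums forces `r = s`). The first `j` parts of `2[α]` are `α i + i`,
so `2[α]` wins the `j`-th partial sum of parts; the first `j` columns of `2[α]` have lengths
`α i + i - 1`, so `2[α]` also wins the `j`-th partial sum of the conjugate. Since conjugation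
reverses dominance between partitions of the same size, neither of `2[α]`, `2[β]` dominates the
other.
-/

/-- The type of a family (or tuple) whose multiplicity function is `f` is defined exactly
when `f` is weakly decreasing on the positive integers; then `f` is the conjugate `λ'`
of the type `λ`. -/
def TypeDefined (f : ℕ → ℕ) : Prop := ∀ i j : ℕ, 1 ≤ i → i ≤ j → f j ≤ f i

/-- The sum of the first `j` parts of the partition `λ` whose conjugate is `f`:
`λ_1 + ⋯ + λ_j = Σ_x min (λ'_x) j`. -/
noncomputable def partSum (f : ℕ → ℕ) (j : ℕ) : ℕ := ∑ᶠ x, min (f x) j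

/-- Dominance order: the partition with conjugate `g` is dominated (`⊴`) by the partition
with conjugate `f`. -/
def ConjDom (g f : ℕ → ℕ) : Prop := ∀ j : ℕ, partSum g j ≤ partSum f j

/-- Strict dominance `⊲` of the partition with conjugate `g` by the one with conjugate `f`. -/
def ConjStrictDom (g f : ℕ → ℕ) : Prop := ConjDom g f ∧ ∃ i : ℕ, 1 ≤ i ∧ g i ≠ f i
/-- The conjugate of the partition `2[α]` of `2n` attached to a partition
`α_1 > ⋯ > α_r > 0` of `n` with distinct parts: its value at `x` is `α_x + x - 1` for
`1 ≤ x ≤ r` and `#{i : 1 ≤ i ≤ r, α_i + i ≥ x}` for `x > r` (and `0` at `x = 0`). -/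
def twoConj (r : ℕ) (α : ℕ → ℕ) (x : ℕ) : ℕ :=
  if x = 0 then 0
  else if x ≤ r then α x + x - 1
  else ((Finset.Icc 1 r).filter fun i => x ≤ α i + i).card

open Finset Function

lemma sum_Icc_one_add_sum_Icc {M : Type*} [AddCommMonoid M] (f : ℕ → M) {k n : ℕ}
    (hkn : k ≤ n) : ∑ x ∈ Icc 1 k, f x + ∑ x ∈ Icc (k + 1) n, f x = ∑ x ∈ Icc 1 n, f x := by
  simpa [← Icc_add_one_left_eq_Ioc] using sum_Ioc_consecutive f (Nat.zero_le k) hkn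

lemma sum_Icc_lt_sum_Icc_of_eq_of_lt {M : Type*} [AddCommMonoid M] [PartialOrder M]
    [IsOrderedCancelAddMonoid M] {u v : ℕ → M} {j : ℕ} (hj : 1 ≤ j)
    (heq : ∀ i, 1 ≤ i → i < j → u i = v i) (hlt : u j < v j) :
    ∑ i ∈ Icc 1 j, u i < ∑ i ∈ Icc 1 j, v i := by
  refine sum_lt_sum (fun i hi => ?_) ⟨j, mem_Icc.2 ⟨hj, le_rfl⟩, hlt⟩
  obtain ⟨hi1, hij⟩ := mem_Icc.1 hi
  rcases hij.lt_or_eq with h | rfl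
  · exact (heq i hi1 h).le
  · exact hlt.le

lemma sum_Icc_lt_sum_Icc_of_lt {β : ℕ → ℕ} {r s : ℕ} (hpos : ∀ i, 1 ≤ i → i ≤ s → 0 < β i)
    (hrs : r < s) : ∑ i ∈ Icc 1 r, β i < ∑ i ∈ Icc 1 s, β i :=
  sum_lt_sum_of_subset (Icc_subset_Icc_right hrs.le) (right_mem_Icc.2 (by omega))
    (by simp [hrs]) (hpos s (by omega) le_rfl) fun _ _ _ => Nat.zero_le _

lemma sum_Icc_two_mul_sub_one (r : ℕ) : ∑ i ∈ Icc 1 r, (2 * i - 1) = r * r := by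
  induction r with
  | zero => simp
  | succ r ih =>
    rw [sum_Icc_succ_top (by omega), ih]
    ring_nf
    omega

lemma sum_card_filter_le_eq_sum_sub {ι : Type*} (s : Finset ι) (a : ι → ℕ) {m M : ℕ}
    (ha : ∀ i ∈ s, a i ≤ M) :
    ∑ x ∈ Icc (m + 1) M, #(s.filter fun i => x ≤ a i) = ∑ i ∈ s, (a i - m) := by
  simp only [card_filter]
  rw [sum_comm]
  refine sum_congr rfl fun i hi => ?_
  have hM := ha i hi
  rw [← card_filter, show (Icc (m + 1) M).filter (· ≤ a i) = Icc (m + 1) (a i) by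
    ext x; simp only [mem_filter, mem_Icc]; omega, Nat.card_Icc]
  omega

lemma filter_Icc_eq_Icc_card {P : ℕ → Prop} [DecidablePred P] {r : ℕ}
    (hP : ∀ i k, 1 ≤ i → i ≤ k → k ≤ r → P k → P i) :
    (Icc 1 r).filter P = Icc 1 #((Icc 1 r).filter P) := by
  refine eq_of_subset_of_card_le (fun k hk => ?_) (by simp)
  obtain ⟨hk, hPk⟩ := mem_filter.1 hk
  obtain ⟨hk1, hkr⟩ := mem_Icc.1 hk
  have hsub : Icc 1 k ⊆ (Icc 1 r).filter P := fun i hi => by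
    obtain ⟨hi1, hik⟩ := mem_Icc.1 hi
    exact mem_filter.2 ⟨mem_Icc.2 ⟨hi1, hik.trans hkr⟩, hP i k hi1 hik hkr hPk⟩
  have := card_le_card hsub
  simp only [Nat.card_Icc, add_tsub_cancel_right] at this
  exact mem_Icc.2 ⟨hk1, this⟩

lemma card_filter_Icc_of_le {P : ℕ → Prop} [DecidablePred P] {r j : ℕ}
    (hP : ∀ i k, 1 ≤ i → i ≤ k → k ≤ r → P k → P i) (hj : j ≤ r) :
    #((Icc 1 j).filter P) = min #((Icc 1 r).filter P) j := by
  have h := filter_Icc_eq_Icc_card hP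
  set c := #((Icc 1 r).filter P)
  have hj_filter : (Icc 1 j).filter P = Icc 1 (min c j) := by
    ext i
    have hi := Finset.ext_iff.1 h i
    simp only [mem_filter, mem_Icc, le_min_iff] at hi ⊢
    by_cases hPi : P i <;> simp only [hPi, and_true, and_false, false_iff,
      not_and, not_le] at hi ⊢ <;> omega
  rw [hj_filter, Nat.card_Icc, add_tsub_cancel_right]

lemma partSum_eq_sum_Icc {f : ℕ → ℕ} {M : ℕ} (hf : support f ⊆ Set.Icc 1 M) (j : ℕ) :
    partSum f j = ∑ x ∈ Icc 1 M, min (f x) j :=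
  finsum_eq_sum_of_support_subset _ fun x hx =>
    by simpa using hf fun h => hx (by simp [h])

lemma finsum_eq_sum_Icc {f : ℕ → ℕ} {M : ℕ} (hf : support f ⊆ Set.Icc 1 M) :
    ∑ᶠ x, f x = ∑ x ∈ Icc 1 M, f x :=
  finsum_eq_sum_of_support_subset f (by rwa [coe_Icc])

/-- Conjugation reverses dominance: if `g` and `f` are the conjugates of `μ ⊴ λ`, the conclusion
says `λ' ⊴ μ'`. -/
lemma sum_Icc_le_of_conjDom {f g : ℕ → ℕ} {M k : ℕ} (hf : support f ⊆ Set.Icc 1 M)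
    (hg : support g ⊆ Set.Icc 1 M) (hg_anti : TypeDefined g)
    (htot : ∑ᶠ x, g x = ∑ᶠ x, f x) (hdom : ConjDom g f) (hk : k ≤ M) :
    ∑ x ∈ Icc 1 k, f x ≤ ∑ x ∈ Icc 1 k, g x := by
  -- Truncating `g` at height `g (k + 1)` caps its first `k` columns and leaves the rest intact.
  set j := g (k + 1)
  have hg_low : ∑ x ∈ Icc 1 k, min (g x) j = ∑ x ∈ Icc 1 k, j :=
    sum_congr rfl fun x hx =>
      min_eq_right (hg_anti x (k + 1) (mem_Icc.1 hx).1 (by have := (mem_Icc.1 hx).2; omega))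
  have hg_high : ∑ x ∈ Icc (k + 1) M, min (g x) j = ∑ x ∈ Icc (k + 1) M, g x :=
    sum_congr rfl fun x hx => min_eq_left (hg_anti (k + 1) x le_add_self (mem_Icc.1 hx).1)
  have hf_low : ∑ x ∈ Icc 1 k, min (f x) j ≤ ∑ x ∈ Icc 1 k, j :=
    sum_le_sum fun x _ => min_le_right _ _
  have hf_high : ∑ x ∈ Icc (k + 1) M, min (f x) j ≤ ∑ x ∈ Icc (k + 1) M, f x :=
    sum_le_sum fun x _ => min_le_left _ _
  have hdom_j := hdom j
  rw [partSum_eq_sum_Icc hg, partSum_eq_sum_Icc hf, ← sum_Icc_one_add_sum_Icc _ hk,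
    ← sum_Icc_one_add_sum_Icc _ hk] at hdom_j
  rw [finsum_eq_sum_Icc hg, finsum_eq_sum_Icc hf, ← sum_Icc_one_add_sum_Icc _ hk,
    ← sum_Icc_one_add_sum_Icc _ hk] at htot
  omega

section TwoConj

variable {r : ℕ} {α : ℕ → ℕ} (hdec : ∀ i j : ℕ, 1 ≤ i → i < j → j ≤ r → α j < α i)
  (hpos : ∀ i : ℕ, 1 ≤ i → i ≤ r → 0 < α i)

lemma twoConj_of_le {x : ℕ} (hx : 1 ≤ x) (hxr : x ≤ r) : twoConj r α x = α x + x - 1 := by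
  simp [twoConj, hxr, Nat.one_le_iff_ne_zero.1 hx]

lemma twoConj_of_lt {x : ℕ} (hrx : r < x) :
    twoConj r α x = #((Icc 1 r).filter fun i => x ≤ α i + i) := by
  simp [twoConj, hrx.not_ge, ((Nat.zero_le r).trans_lt hrx).ne']

lemma add_index_le_add_sum {i : ℕ} (hi : i ∈ Icc 1 r) : α i + i ≤ r + ∑ i ∈ Icc 1 r, α i := by
  have := single_le_sum (fun i _ => Nat.zero_le (α i)) hi
  have := (mem_Icc.1 hi).2
  omega

lemma support_twoConj_subset : support (twoConj r α) ⊆ Set.Icc 1 (r + ∑ i ∈ Icc 1 r, α i) := by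
  intro x hx
  rw [mem_support] at hx
  rcases Nat.eq_zero_or_pos x with rfl | hx0
  · simp [twoConj] at hx
  rcases le_or_gt x r with hxr | hrx
  · exact ⟨hx0, by have := add_index_le_add_sum (α := α) (mem_Icc.2 ⟨hx0, hxr⟩); omega⟩
  · rw [twoConj_of_lt hrx, card_ne_zero] at hx
    obtain ⟨i, hi⟩ := hx
    rw [mem_filter] at hi
    exact ⟨hx0, hi.2.trans (add_index_le_add_sum hi.1)⟩

include hdec in
lemma add_index_le_add_index {i k : ℕ} (hi : 1 ≤ i) (hik : i ≤ k) (hkr : k ≤ r) :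
    α k + k ≤ α i + i := by
  induction k, hik using Nat.le_induction with
  | base => exact le_rfl
  | succ k hik ih =>
    have := hdec k (k + 1) (hi.trans hik) k.lt_succ_self hkr
    have := ih (by omega)
    omega

include hdec hpos in
lemma lt_add_index {i : ℕ} (hi : 1 ≤ i) (hir : i ≤ r) : r < α i + i := by
  have := add_index_le_add_index hdec hi hir le_rfl
  have := hpos r (hi.trans hir) le_rfl
  omega

include hdec hpos in
lemma twoConj_typeDefined : TypeDefined (twoConj r α) := by
  intro i j hi hij
  rcases le_or_gt j r with hjr | hrj
  · rw [twoConj_of_le hi (hij.trans hjr), twoConj_of_le (hi.trans hij) hjr]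
    have := add_index_le_add_index hdec hi hij hjr
    omega
  rw [twoConj_of_lt hrj]
  rcases le_or_gt i r with hir | hri
  · have := card_le_card (filter_subset (fun i => j ≤ α i + i) (Icc 1 r))
    have := lt_add_index hdec hpos hi hir
    rw [Nat.card_Icc] at *
    rw [twoConj_of_le hi hir]
    omega
  · rw [twoConj_of_lt hri]
    exact card_le_card (monotone_filter_right _ fun _ _ => hij.trans)

include hdec hpos in
lemma min_twoConj_eq_card {x j : ℕ} (hx : 1 ≤ x) (hj : j ≤ r) :
    min (twoConj r α x) j = #((Icc 1 j).filter fun i => x ≤ α i + i) := by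
  rcases le_or_gt x r with hxr | hrx
  · have hall : (Icc 1 j).filter (fun i => x ≤ α i + i) = Icc 1 j :=
      filter_true_of_mem fun i hi => by
        have := lt_add_index hdec hpos (mem_Icc.1 hi).1 ((mem_Icc.1 hi).2.trans hj)
        omega
    have := lt_add_index hdec hpos hx hxr
    rw [hall, Nat.card_Icc, twoConj_of_le hx hxr]
    omega
  · rw [twoConj_of_lt hrx, card_filter_Icc_of_le
      (fun i k hi hik hkr h => h.trans (add_index_le_add_index hdec hi hik hkr)) hj]

include hdec hpos in
lemma partSum_twoConj {j : ℕ} (hj : j ≤ r) :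
    partSum (twoConj r α) j = ∑ i ∈ Icc 1 j, (α i + i) := by
  rw [partSum_eq_sum_Icc support_twoConj_subset,
    sum_congr rfl fun x hx => min_twoConj_eq_card hdec hpos (mem_Icc.1 hx).1 hj]
  simpa using sum_card_filter_le_eq_sum_sub (Icc 1 j) (fun i => α i + i) (m := 0)
    fun i hi => add_index_le_add_sum (mem_Icc.2 ⟨(mem_Icc.1 hi).1, (mem_Icc.1 hi).2.trans hj⟩)

include hdec hpos in
lemma finsum_twoConj : ∑ᶠ x, twoConj r α x = 2 * ∑ i ∈ Icc 1 r, α i := by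
  rw [finsum_eq_sum_Icc support_twoConj_subset, ← sum_Icc_one_add_sum_Icc _ le_self_add,
    sum_congr rfl fun x hx => twoConj_of_le (mem_Icc.1 hx).1 (mem_Icc.1 hx).2,
    sum_congr rfl fun x hx => twoConj_of_lt (α := α) (by have := (mem_Icc.1 hx).1; omega),
    sum_card_filter_le_eq_sum_sub _ _ fun i hi => add_index_le_add_sum hi, ← sum_add_distrib]
  have hterm : ∑ i ∈ Icc 1 r, ((α i + i - 1) + (α i + i - r)) + ∑ i ∈ Icc 1 r, r
      = 2 * ∑ i ∈ Icc 1 r, α i + r * r := by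
    rw [← sum_add_distrib, mul_sum, ← sum_Icc_two_mul_sub_one, ← sum_add_distrib]
    refine sum_congr rfl fun i hi => ?_
    have := lt_add_index hdec hpos (mem_Icc.1 hi).1 (mem_Icc.1 hi).2
    have := (mem_Icc.1 hi).1
    omega
  rw [sum_const, Nat.card_Icc, smul_eq_mul, add_tsub_cancel_right] at hterm
  omega

end TwoConj
lemma exists_first_ne {r s : ℕ} {α β : ℕ → ℕ} (hαpos : ∀ i : ℕ, 1 ≤ i → i ≤ r → 0 < α i)
    (hβpos : ∀ i : ℕ, 1 ≤ i → i ≤ s → 0 < β i)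
    (hsum : ∑ i ∈ Icc 1 r, α i = ∑ i ∈ Icc 1 s, β i)
    (hne : ¬ (r = s ∧ ∀ i ∈ Icc 1 r, α i = β i)) :
    ∃ j, 1 ≤ j ∧ j ≤ r ∧ j ≤ s ∧ α j ≠ β j ∧ ∀ i, 1 ≤ i → i < j → α i = β i := by
  classical
  have hex : ∃ j, 1 ≤ j ∧ j ≤ r ∧ j ≤ s ∧ α j ≠ β j := by
    by_contra! hagree
    have hsum_eq {t : ℕ} (htr : t ≤ r) (hts : t ≤ s) :
        ∑ i ∈ Icc 1 t, α i = ∑ i ∈ Icc 1 t, β i :=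
      sum_congr rfl fun i hi => hagree i (mem_Icc.1 hi).1 ((mem_Icc.1 hi).2.trans htr)
        ((mem_Icc.1 hi).2.trans hts)
    rcases lt_trichotomy r s with hrs | rfl | hsr
    · exact (hsum_eq le_rfl hrs.le ▸ hsum).not_lt (sum_Icc_lt_sum_Icc_of_lt hβpos hrs)
    · exact hne ⟨rfl, fun i hi => hagree i (mem_Icc.1 hi).1 (mem_Icc.1 hi).2 (mem_Icc.1 hi).2⟩
    · exact (hsum_eq hsr.le le_rfl ▸ hsum).not_gt (sum_Icc_lt_sum_Icc_of_lt hαpos hsr)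
  obtain ⟨hj1, hjr, hjs, hjne⟩ := Nat.find_spec hex
  refine ⟨Nat.find hex, hj1, hjr, hjs, hjne, fun i hi1 hij => ?_⟩
  by_contra hne_i
  exact Nat.find_min hex hij ⟨hi1, by omega, by omega, hne_i⟩

lemma incomparable_of_first_lt {r s : ℕ} {α β : ℕ → ℕ}
    (hαdec : ∀ i j : ℕ, 1 ≤ i → i < j → j ≤ r → α j < α i)
    (hαpos : ∀ i : ℕ, 1 ≤ i → i ≤ r → 0 < α i)
    (hβdec : ∀ i j : ℕ, 1 ≤ i → i < j → j ≤ s → β j < β i)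
    (hβpos : ∀ i : ℕ, 1 ≤ i → i ≤ s → 0 < β i)
    (hsum : ∑ i ∈ Icc 1 r, α i = ∑ i ∈ Icc 1 s, β i) {j : ℕ} (hj1 : 1 ≤ j) (hjr : j ≤ r)
    (hjs : j ≤ s) (hagree : ∀ i, 1 ≤ i → i < j → α i = β i) (hlt : β j < α j) :
    ¬ ConjDom (twoConj r α) (twoConj s β) ∧ ¬ ConjDom (twoConj s β) (twoConj r α) := by
  constructor
  · intro hdom
    have := hdom j
    rw [partSum_twoConj hαdec hαpos hjr, partSum_twoConj hβdec hβpos hjs] at this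
    exact this.not_gt <| sum_Icc_lt_sum_Icc_of_eq_of_lt hj1
      (fun i hi1 hij => by rw [hagree i hi1 hij]) (by omega)
  · intro hdom
    set M := r + s + ∑ i ∈ Icc 1 r, α i
    have := sum_Icc_le_of_conjDom (k := j)
      (support_twoConj_subset.trans (Set.Icc_subset_Icc_right (by omega)))
      (support_twoConj_subset.trans (Set.Icc_subset_Icc_right (by omega)))
      (twoConj_typeDefined hβdec hβpos)
      (by rw [finsum_twoConj hαdec hαpos, finsum_twoConj hβdec hβpos, hsum]) hdom
      (show j ≤ M by omega)
    refine this.not_gt <| sum_Icc_lt_sum_Icc_of_eq_of_lt hj1 (fun i hi1 hij => ?_) ?_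
    · rw [twoConj_of_le hi1 (by omega), twoConj_of_le hi1 (by omega), hagree i hi1 hij]
    · rw [twoConj_of_le hj1 hjr, twoConj_of_le hj1 hjs]
      omega

/-- If `α` and `β` are distinct partitions of `n` into distinct parts,
then `2[α]` and `2[β]` are incomparable in the dominance order. -/
theorem stmt_13 (n r s : ℕ) (α β : ℕ → ℕ)
    (hαdec : ∀ i j : ℕ, 1 ≤ i → i < j → j ≤ r → α j < α i)
    (hαpos : ∀ i : ℕ, 1 ≤ i → i ≤ r → 0 < α i)
    (hαsum : (∑ i ∈ Finset.Icc 1 r, α i) = n)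
    (hβdec : ∀ i j : ℕ, 1 ≤ i → i < j → j ≤ s → β j < β i)
    (hβpos : ∀ i : ℕ, 1 ≤ i → i ≤ s → 0 < β i)
    (hβsum : (∑ i ∈ Finset.Icc 1 s, β i) = n)
    (hne : ¬ (r = s ∧ ∀ i ∈ Finset.Icc 1 r, α i = β i)) :
    ¬ ConjDom (twoConj r α) (twoConj s β) ∧ ¬ ConjDom (twoConj s β) (twoConj r α) := by
  have hsum : ∑ i ∈ Icc 1 r, α i = ∑ i ∈ Icc 1 s, β i := hαsum.trans hβsum.symm
  obtain ⟨j, hj1, hjr, hjs, hjne, hagree⟩ := exists_first_ne hαpos hβpos hsum hne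
  rcases hjne.lt_or_gt with hlt | hgt
  · exact (incomparable_of_first_lt hβdec hβpos hαdec hαpos hsum.symm hj1 hjs hjr
      (fun i hi1 hij => (hagree i hi1 hij).symm) hlt).symm
  · exact incomparable_of_first_lt hαdec hαpos hβdec hβpos hsum hj1 hjr hjs hagree hgt
end

section
/- Let m ≥ 1 and let ν be a partition of n ≥ 1 with conjugate ν', largest part ℓ = ν_1, and exactly k nonzero parts. For 1 ≤ i ≤ ℓ let Q_i be the multiset family { M_1, …, M_{ν'_i} }, where M_j is the multiset consisting of m−1 copies of 1 together with one copy of j. Then (Q_1,…,Q_ℓ) is a closed multiset family tuple with each Q_i of shape (m^{ν'_i}); its type λ is defined and its conjugate is λ' = ((m−1)n + ν_1, ν_2, …, ν_k). Moreover, for every multiset family tuple (R_1,…,R_ℓ) with each R_i of shape (m^{ν'_i}) whose type μ is defined, the conjugate μ' is lexicographically at most ((m−1)n + ν_1, ν_2, …, ν_k). -/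
/-- The multiplicity of `i` in a multiset family `Q`: the total number of occurrences of `i`,
counted with multiplicity, among the multisets in `Q`. -/
def msetMult (Q : Finset (Multiset ℕ)) (i : ℕ) : ℕ := ∑ S ∈ Q, S.count i

/-- `Q` is a multiset family of shape `(m^n)`: a collection of `n` distinct multisets of
cardinality `m` with elements in the positive integers. -/
def IsMsetFamily (m n : ℕ) (Q : Finset (Multiset ℕ)) : Prop :=
  Q.card = n ∧ ∀ S ∈ Q, Multiset.card S = m ∧ ∀ x ∈ S, 1 ≤ x

/-- `B` majorizes `A` (written `A ⪯ B`) for multisets: the `r`-th smallest element of `A`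
is at most the `r`-th smallest element of `B`. -/
def MsetMaj (A B : Multiset ℕ) : Prop :=
  ∀ r : ℕ, (A.sort (· ≤ ·)).getD r 0 ≤ (B.sort (· ≤ ·)).getD r 0

/-- A multiset family (of cardinality-`m` multisets) is closed if it is downward closed
under majorization. -/
def ClosedMsetFam (m : ℕ) (Q : Finset (Multiset ℕ)) : Prop :=
  ∀ B ∈ Q, ∀ A : Multiset ℕ, Multiset.card A = m → (∀ x ∈ A, 1 ≤ x) → MsetMaj A B → A ∈ Q

/-- The total multiplicity of `i` over a tuple of multiset families. -/
def msetTupMult {k : ℕ} (Q : Fin k → Finset (Multiset ℕ)) (i : ℕ) : ℕ := ∑ j, msetMult (Q j) i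
/-- The conjugate of the partition `ν` (with at most `k` parts): `ν'_i = #{j ≤ k : ν_j ≥ i}`. -/
def nuConj (k : ℕ) (nu : ℕ → ℕ) (i : ℕ) : ℕ := ((Finset.Icc 1 k).filter fun j => i ≤ nu j).card

/-- The multiset family `{M_1, …, M_c}` where `M_j` consists of `m-1` copies of `1`
together with one copy of `j`. -/
def onesFam (m c : ℕ) : Finset (Multiset ℕ) :=
  (Finset.Icc 1 c).image fun j => (j ::ₘ Multiset.replicate (m - 1) 1)

/-- The total multiplicity of `x` over the tuple `(Q_1, …, Q_ℓ)`. -/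
def tupMultIcc (l : ℕ) (Q : ℕ → Finset (Multiset ℕ)) (x : ℕ) : ℕ :=
  ∑ i ∈ Finset.Icc 1 l, msetMult (Q i) x


/-!
In a family of shape `(m^c)` only the multiset `1^m` can have `m` ones, so the multiplicity
of `1` is at most `(m-1)c + 1`, attained by `{M_1, …, M_c}`. When it is attained, every member
has at least `m - 1` ones, so the family is `{M_x : x ∈ T}` for a `c`-set `T ∋ 1`, and the
multiplicities of `2, …, j` add up to `#(T ∩ [2, j]) ≤ min c j - 1`, which `{M_1, …, M_c}`
achieves. Summed over the tuple: `μ'_1 ≤ λ'_1`, and if equality holds then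
`μ'_2 + ⋯ + μ'_j ≤ λ'_2 + ⋯ + λ'_j` for every `j`, which is the lexicographic bound. The values
of `λ'` follow from `x ≤ ν'_i ↔ i ≤ ν_x`.
-/

open Finset

def onesMset (m x : ℕ) : Multiset ℕ := x ::ₘ Multiset.replicate (m - 1) 1

lemma onesFam_eq_image (m c : ℕ) : onesFam m c = (Icc 1 c).image (onesMset m) := rfl

lemma onesMset_injective (m : ℕ) : Function.Injective (onesMset m) :=
  fun _ _ h => (Multiset.cons_inj_left _).mp h

lemma card_onesMset {m : ℕ} (hm : 1 ≤ m) (x : ℕ) : Multiset.card (onesMset m x) = m := by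
  simp only [onesMset, Multiset.card_cons, Multiset.card_replicate]
  omega

lemma count_onesMset (m x y : ℕ) :
    (onesMset m x).count y = (if y = 1 then m - 1 else 0) + if y = x then 1 else 0 := by
  rw [onesMset, Multiset.count_cons, Multiset.count_replicate]
  split_ifs <;> omega

lemma msetMult_image_onesMset (m : ℕ) (T : Finset ℕ) (y : ℕ) :
    msetMult (T.image (onesMset m)) y
      = (if y = 1 then (m - 1) * #T else 0) + if y ∈ T then 1 else 0 := by
  rw [msetMult, sum_image (onesMset_injective m).injOn]
  simp only [count_onesMset, sum_add_distrib, sum_ite_eq, sum_const, smul_eq_mul]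
  split_ifs <;> simp [mul_comm]

lemma msetMult_onesFam_one {m c : ℕ} (hc : 1 ≤ c) : msetMult (onesFam m c) 1 = (m - 1) * c + 1 := by
  simp [onesFam_eq_image, msetMult_image_onesMset, hc]

lemma msetMult_onesFam_of_ne_one (m c : ℕ) {y : ℕ} (hy : y ≠ 1) :
    msetMult (onesFam m c) y = if y ∈ Icc 1 c then 1 else 0 := by
  simp [onesFam_eq_image, msetMult_image_onesMset, hy]

lemma isMsetFamily_onesFam {m : ℕ} (hm : 1 ≤ m) (c : ℕ) : IsMsetFamily m c (onesFam m c) := by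
  refine ⟨by simp [onesFam_eq_image, card_image_of_injective _ (onesMset_injective m)], ?_⟩
  simp only [onesFam_eq_image, mem_image, mem_Icc]
  rintro _ ⟨x, ⟨hx, -⟩, rfl⟩
  refine ⟨card_onesMset hm x, fun y hy => ?_⟩
  rcases Multiset.mem_cons.mp hy with rfl | hy
  · exact hx
  · exact (Multiset.eq_of_mem_replicate hy).ge

lemma sort_onesMset (m : ℕ) {v : ℕ} (hv : 1 ≤ v) :
    (onesMset m v).sort (· ≤ ·) = List.replicate (m - 1) 1 ++ [v] := by
  refine List.Perm.eq_of_pairwise' (Multiset.pairwise_sort _ _) ?_ ?_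
  · simp only [List.pairwise_append, List.pairwise_replicate, List.mem_replicate,
      List.mem_singleton]
    grind
  · rw [← Multiset.coe_eq_coe, Multiset.sort_eq, onesMset, ← Multiset.coe_replicate,
      Multiset.cons_coe, Multiset.coe_eq_coe]
    exact (List.perm_append_singleton v _).symm

lemma closedMsetFam_onesFam {m : ℕ} (hm : 1 ≤ m) (c : ℕ) : ClosedMsetFam m (onesFam m c) := by
  intro B hB A hA hApos hAB
  obtain ⟨v, hv, rfl⟩ := mem_image.mp hB
  rw [mem_Icc] at hv
  change MsetMaj A (onesMset m v) at hAB
  set L := A.sort (· ≤ ·) with hLA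
  have hL : L.length = m := by rw [Multiset.length_sort, hA]
  have hLpos : ∀ r (hr : r < m), 1 ≤ L[r] :=
    fun r hr => hApos _ ((Multiset.mem_sort _).mp (List.getElem_mem _))
  have hLB : ∀ r (hr : r < m), L[r] ≤ (List.replicate (m - 1) 1 ++ [v])[r]'(by simp; omega) := by
    intro r hr
    simpa [MsetMaj, ← hLA, sort_onesMset m hv.1, List.getD_eq_getElem?_getD, hL, hr,
      List.getElem?_eq_getElem (show r < (List.replicate (m - 1) 1 ++ [v]).length by simp; omega)]
      using hAB r
  set w := L[m - 1]
  -- Majorization by `1^(m-1) v` forces the first `m - 1` entries of `A` to be `1`.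
  have hLw : L = List.replicate (m - 1) 1 ++ [w] := by
    refine List.ext_getElem (by simp [hL]; omega) fun r hr _ => ?_
    rcases Nat.lt_or_ge r (m - 1) with hr' | hr'
    · have hrB := hLB r (by omega)
      have := hLpos r (by omega)
      rw [List.getElem_append_left (by simpa using hr'), List.getElem_replicate] at hrB ⊢
      omega
    · obtain rfl : r = m - 1 := by omega
      simp [w]
  have hwv : w ≤ v := by simpa using hLB (m - 1) (by omega)
  have hAw : A = onesMset m w := by
    rw [← Multiset.sort_eq A (· ≤ ·), ← hLA, hLw, onesMset, ← Multiset.coe_replicate,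
      Multiset.cons_coe, Multiset.coe_eq_coe]
    exact List.perm_append_singleton w _
  exact mem_image.mpr ⟨w, mem_Icc.mpr ⟨hLpos _ (by omega), hwv.trans hv.2⟩, hAw.symm⟩

lemma count_one_le_of_card_eq {m : ℕ} {S : Multiset ℕ} (hS : Multiset.card S = m) :
    S.count 1 ≤ m - 1 + if S = Multiset.replicate m 1 then 1 else 0 := by
  split_ifs with h
  · rw [h, Multiset.count_replicate_self]
    omega
  · have hne : S.count 1 ≠ m := fun h' =>
      h (Multiset.eq_replicate.mpr ⟨hS, fun b hb =>
        (Multiset.count_eq_card.mp (h'.trans hS.symm) b hb).symm⟩)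
    have := hS ▸ Multiset.count_le_card 1 S
    omega

lemma sum_ite_eq_replicate_le {m c : ℕ} {Q : Finset (Multiset ℕ)} (hQ : #Q = c) :
    ∑ S ∈ Q, (m - 1 + if S = Multiset.replicate m 1 then 1 else 0) ≤ (m - 1) * c + 1 := by
  rw [sum_add_distrib, sum_const, sum_ite_eq', hQ, smul_eq_mul, mul_comm]
  split_ifs <;> omega

lemma msetMult_one_le {m c : ℕ} {Q : Finset (Multiset ℕ)} (hQ : IsMsetFamily m c Q) :
    msetMult Q 1 ≤ (m - 1) * c + 1 :=
  (sum_le_sum fun S hS => count_one_le_of_card_eq (hQ.2 S hS).1).trans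
    (sum_ite_eq_replicate_le hQ.1)

lemma exists_eq_onesMset {m : ℕ} (hm : 1 ≤ m) {S : Multiset ℕ} (hS : Multiset.card S = m)
    (h : m - 1 ≤ S.count 1) : ∃ x, S = onesMset m x := by
  have hle : Multiset.replicate (m - 1) 1 ≤ S := Multiset.le_count_iff_replicate_le.mp h
  obtain ⟨x, hx⟩ := Multiset.card_eq_one.mp <| show
      Multiset.card (S - Multiset.replicate (m - 1) 1) = 1 by
    rw [Multiset.card_sub hle, hS, Multiset.card_replicate]
    omega
  exact ⟨x, by rw [onesMset, ← Multiset.singleton_add, ← hx, Multiset.sub_add_cancel hle]⟩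

lemma exists_eq_image_onesMset {m c : ℕ} (hm : 1 ≤ m) {Q : Finset (Multiset ℕ)}
    (hQ : IsMsetFamily m c Q) (h1 : msetMult Q 1 = (m - 1) * c + 1) :
    ∃ T : Finset ℕ, 1 ∈ T ∧ #T = c ∧ Q = T.image (onesMset m) := by
  classical
  have hle := fun S hS => count_one_le_of_card_eq (hQ.2 S hS).1
  -- Equality in `msetMult_one_le` is attained termwise.
  have hcount := (sum_eq_sum_iff_of_le hle).mp
    (le_antisymm (sum_le_sum hle) ((sum_ite_eq_replicate_le hQ.1).trans h1.ge))
  have hrange : ∀ S ∈ Q, S ∈ Set.range (onesMset m) := fun S hS =>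
    have ⟨x, hx⟩ := exists_eq_onesMset hm (hQ.2 S hS).1 (by rw [hcount S hS]; omega)
    ⟨x, hx.symm⟩
  set T := Q.preimage (onesMset m) (onesMset_injective m).injOn
  have hQT : Q = T.image (onesMset m) := by rw [image_preimage, filter_true_of_mem hrange]
  have hT : #T = c := by rw [← hQ.1, hQT, card_image_of_injective _ (onesMset_injective m)]
  refine ⟨T, ?_, hT, hQT⟩
  have := msetMult_image_onesMset m T 1
  rw [← hQT, h1, hT] at this
  simpa using this

lemma sum_msetMult_Icc_two_le {m c : ℕ} (hm : 1 ≤ m) {Q : Finset (Multiset ℕ)}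
    (hQ : IsMsetFamily m c Q) (h1 : msetMult Q 1 = (m - 1) * c + 1) (j : ℕ) :
    ∑ x ∈ Icc 2 j, msetMult Q x ≤ ∑ x ∈ Icc 2 j, msetMult (onesFam m c) x := by
  obtain ⟨T, hT1, rfl, rfl⟩ := exists_eq_image_onesMset hm hQ h1
  have hne : ∀ x ∈ Icc 2 j, x ≠ 1 := fun x hx => by rw [mem_Icc] at hx; omega
  have hIcc : {x ∈ Icc 2 j | x ∈ Icc 1 #T} = Icc 2 (min #T j) := by
    ext x
    simp only [mem_filter, mem_Icc]
    omega
  rw [sum_congr rfl fun x hx => msetMult_onesFam_of_ne_one m #T (hne x hx),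
    sum_congr rfl fun x hx => msetMult_image_onesMset m T x]
  simp only [sum_add_distrib, sum_ite_eq', if_neg fun h => hne 1 h rfl, zero_add, sum_boole,
    Nat.cast_id, hIcc, Nat.card_Icc]
  have hsub : {x ∈ Icc 2 j | x ∈ T} ⊆ T.erase 1 := fun x hx => by
    simp only [mem_filter, mem_Icc] at hx
    exact mem_erase.mpr ⟨by omega, hx.2⟩
  have := card_le_card hsub
  have := card_filter_le (Icc 2 j) (· ∈ T)
  rw [card_erase_of_mem hT1, Nat.card_Icc] at *
  omega

lemma tupMultIcc_onesFam_one {m l : ℕ} {c : ℕ → ℕ} (hc : ∀ i ∈ Icc 1 l, 1 ≤ c i) :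
    tupMultIcc l (fun i => onesFam m (c i)) 1 = (m - 1) * ∑ i ∈ Icc 1 l, c i + l := by
  rw [tupMultIcc, sum_congr rfl fun i hi => msetMult_onesFam_one (hc i hi), sum_add_distrib,
    ← mul_sum]
  simp

lemma tupMultIcc_onesFam_of_two_le (m l : ℕ) (c : ℕ → ℕ) {x : ℕ} (hx : 2 ≤ x) :
    tupMultIcc l (fun i => onesFam m (c i)) x = #{i ∈ Icc 1 l | x ≤ c i} := by
  rw [tupMultIcc, sum_congr rfl fun i _ => msetMult_onesFam_of_ne_one m (c i) (by omega : x ≠ 1)]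
  simp [sum_boole, mem_Icc, show 1 ≤ x by omega]

section Tuple

variable {m l : ℕ} {c : ℕ → ℕ} {R : ℕ → Finset (Multiset ℕ)}

lemma msetMult_one_le_onesFam (hR : ∀ i ∈ Icc 1 l, IsMsetFamily m (c i) (R i))
    (hc : ∀ i ∈ Icc 1 l, 1 ≤ c i) :
    ∀ i ∈ Icc 1 l, msetMult (R i) 1 ≤ msetMult (onesFam m (c i)) 1 := fun i hi =>
  (msetMult_one_le (hR i hi)).trans (msetMult_onesFam_one (hc i hi)).ge

lemma tupMultIcc_one_le (hR : ∀ i ∈ Icc 1 l, IsMsetFamily m (c i) (R i))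
    (hc : ∀ i ∈ Icc 1 l, 1 ≤ c i) :
    tupMultIcc l R 1 ≤ tupMultIcc l (fun i => onesFam m (c i)) 1 :=
  sum_le_sum (msetMult_one_le_onesFam hR hc)

lemma sum_tupMultIcc_Icc_two_le (hm : 1 ≤ m) (hR : ∀ i ∈ Icc 1 l, IsMsetFamily m (c i) (R i))
    (hc : ∀ i ∈ Icc 1 l, 1 ≤ c i)
    (h1 : tupMultIcc l R 1 = tupMultIcc l (fun i => onesFam m (c i)) 1) (j : ℕ) :
    ∑ x ∈ Icc 2 j, tupMultIcc l R x
      ≤ ∑ x ∈ Icc 2 j, tupMultIcc l (fun i => onesFam m (c i)) x := by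
  have heq := (sum_eq_sum_iff_of_le (msetMult_one_le_onesFam hR hc)).mp h1
  simp only [tupMultIcc]
  rw [sum_comm, sum_comm (s := Icc 2 j)]
  exact sum_le_sum fun i hi => sum_msetMult_Icc_two_le hm (hR i hi)
    ((heq i hi).trans (msetMult_onesFam_one (hc i hi))) j

lemma tupMultIcc_le_of_eqOn_lt (hm : 1 ≤ m) (hR : ∀ i ∈ Icc 1 l, IsMsetFamily m (c i) (R i))
    (hc : ∀ i ∈ Icc 1 l, 1 ≤ c i) {j : ℕ} (hj : 1 ≤ j)
    (hpre : ∀ i, 1 ≤ i → i < j →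
      tupMultIcc l R i = tupMultIcc l (fun i => onesFam m (c i)) i) :
    tupMultIcc l R j ≤ tupMultIcc l (fun i => onesFam m (c i)) j := by
  obtain rfl | hj2 := hj.eq_or_lt
  · exact tupMultIcc_one_le hR hc
  have hsum := sum_tupMultIcc_Icc_two_le hm hR hc (hpre 1 le_rfl hj2) j
  obtain ⟨j, rfl⟩ : ∃ j', j = j' + 1 := ⟨j - 1, by omega⟩
  have hprefix : ∑ x ∈ Icc 2 j, tupMultIcc l R x
      = ∑ x ∈ Icc 2 j, tupMultIcc l (fun i => onesFam m (c i)) x :=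
    sum_congr rfl fun x hx => hpre x (by grind) (by grind)
  rw [sum_Icc_succ_top (by omega), sum_Icc_succ_top (by omega), hprefix] at hsum
  omega

end Tuple

lemma lex_of_le_of_eqOn_lt {f g : ℕ → ℕ}
    (h : ∀ j, 1 ≤ j → (∀ i, 1 ≤ i → i < j → g i = f i) → g j ≤ f j) :
    (∀ i, 1 ≤ i → g i = f i) ∨ ∃ j, 1 ≤ j ∧ g j < f j ∧ ∀ i, 1 ≤ i → i < j → g i = f i := by
  classical
  by_cases hall : ∀ i, 1 ≤ i → g i = f i
  · exact .inl hall
  push Not at hall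
  obtain ⟨hj1, hjne⟩ := Nat.find_spec hall
  have hpre : ∀ i, 1 ≤ i → i < Nat.find hall → g i = f i := fun i hi hlt => by
    by_contra hne
    exact Nat.find_min hall hlt ⟨hi, hne⟩
  exact .inr ⟨_, hj1, (h _ hj1 hpre).lt_of_ne hjne, hpre⟩

lemma card_filter_Icc_one_le {a b : ℕ} (h : a ≤ b) : #{i ∈ Icc 1 b | i ≤ a} = a := by
  rw [show {i ∈ Icc 1 b | i ≤ a} = Icc 1 a by ext; simp only [mem_filter, mem_Icc]; omega,
    Nat.card_Icc]
  omega

lemma le_nuConj_iff {k : ℕ} {nu : ℕ → ℕ} (hmono : ∀ i j : ℕ, 1 ≤ i → i ≤ j → nu j ≤ nu i)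
    (hzero : ∀ i : ℕ, k < i → nu i = 0) {i x : ℕ} (hi : 1 ≤ i) (hx : 1 ≤ x) :
    x ≤ nuConj k nu i ↔ i ≤ nu x := by
  rw [nuConj]
  constructor
  · intro h
    by_contra! hlt
    have hsub : {j ∈ Icc 1 k | i ≤ nu j} ⊆ Icc 1 (x - 1) := fun j hj => by
      simp only [mem_filter, mem_Icc] at hj ⊢
      by_contra! hjx
      have := hmono x j hx (by omega)
      omega
    have := card_le_card hsub
    rw [Nat.card_Icc] at this
    omega
  · intro h
    have hxk : x ≤ k := by
      by_contra! hxk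
      have := hzero x hxk
      omega
    have hsub : Icc 1 x ⊆ {j ∈ Icc 1 k | i ≤ nu j} := fun j hj => by
      simp only [mem_filter, mem_Icc] at hj ⊢
      have := hmono j x hj.1 hj.2
      omega
    have := card_le_card hsub
    rw [Nat.card_Icc] at this
    omega

lemma sum_nuConj {k : ℕ} {nu : ℕ → ℕ} (hmono : ∀ i j : ℕ, 1 ≤ i → i ≤ j → nu j ≤ nu i) :
    ∑ i ∈ Icc 1 (nu 1), nuConj k nu i = ∑ j ∈ Icc 1 k, nu j := by
  simp only [nuConj, card_filter]
  rw [sum_comm]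
  refine sum_congr rfl fun j hj => ?_
  rw [← card_filter, card_filter_Icc_one_le (hmono 1 j le_rfl (mem_Icc.mp hj).1)]

lemma card_le_nuConj {k : ℕ} {nu : ℕ → ℕ} (hmono : ∀ i j : ℕ, 1 ≤ i → i ≤ j → nu j ≤ nu i)
    (hzero : ∀ i : ℕ, k < i → nu i = 0) {x : ℕ} (hx : 1 ≤ x) :
    #{i ∈ Icc 1 (nu 1) | x ≤ nuConj k nu i} = nu x := by
  rw [filter_congr fun i hi => le_nuConj_iff hmono hzero (mem_Icc.mp hi).1 hx,
    card_filter_Icc_one_le (hmono 1 x le_rfl hx)]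

theorem stmt_17_general (m n k : ℕ) (hm : 1 ≤ m) (nu : ℕ → ℕ)
    (hmono : ∀ i j : ℕ, 1 ≤ i → i ≤ j → nu j ≤ nu i)
    (hzero : ∀ i : ℕ, k < i → nu i = 0)
    (hsum : (∑ i ∈ Finset.Icc 1 k, nu i) = n) :
    (∀ i : ℕ, 1 ≤ i → i ≤ nu 1 →
      IsMsetFamily m (nuConj k nu i) (onesFam m (nuConj k nu i)) ∧
      ClosedMsetFam m (onesFam m (nuConj k nu i))) ∧
    TypeDefined (tupMultIcc (nu 1) fun i => onesFam m (nuConj k nu i)) ∧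
    (tupMultIcc (nu 1) fun i => onesFam m (nuConj k nu i)) 1 = (m - 1) * n + nu 1 ∧
    (∀ j : ℕ, 2 ≤ j → (tupMultIcc (nu 1) fun i => onesFam m (nuConj k nu i)) j = nu j) ∧
    (∀ R : ℕ → Finset (Multiset ℕ),
      (∀ i : ℕ, 1 ≤ i → i ≤ nu 1 → IsMsetFamily m (nuConj k nu i) (R i)) →
      TypeDefined (tupMultIcc (nu 1) R) →
      ((∀ i : ℕ, 1 ≤ i →
          tupMultIcc (nu 1) R i = (tupMultIcc (nu 1) fun i => onesFam m (nuConj k nu i)) i) ∨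
        ∃ j : ℕ, 1 ≤ j ∧
          tupMultIcc (nu 1) R j < (tupMultIcc (nu 1) fun i => onesFam m (nuConj k nu i)) j ∧
          ∀ i : ℕ, 1 ≤ i → i < j →
            tupMultIcc (nu 1) R i
              = (tupMultIcc (nu 1) fun i => onesFam m (nuConj k nu i)) i)) := by
  have hc : ∀ i ∈ Icc 1 (nu 1), 1 ≤ nuConj k nu i := fun i hi =>
    (le_nuConj_iff hmono hzero (mem_Icc.mp hi).1 le_rfl).mpr (mem_Icc.mp hi).2
  have hF1 : (tupMultIcc (nu 1) fun i => onesFam m (nuConj k nu i)) 1 = (m - 1) * n + nu 1 := by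
    rw [tupMultIcc_onesFam_one hc, sum_nuConj hmono, hsum]
  have hF : ∀ j, 2 ≤ j → (tupMultIcc (nu 1) fun i => onesFam m (nuConj k nu i)) j = nu j :=
    fun j hj => by rw [tupMultIcc_onesFam_of_two_le m _ _ hj, card_le_nuConj hmono hzero (by omega)]
  refine ⟨fun i _ _ => ⟨isMsetFamily_onesFam hm _, closedMsetFam_onesFam hm _⟩, ?_, hF1, hF, ?_⟩
  · intro i j hi hij
    obtain rfl | hi2 := hi.eq_or_lt
    · obtain rfl | hj2 := hij.eq_or_lt
      · rfl
      · rw [hF j hj2, hF1]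
        exact (hmono 1 j le_rfl hij).trans (Nat.le_add_left _ _)
    · rw [hF i hi2, hF j (hi2.trans_le hij)]
      exact hmono i j hi hij
  · intro R hR _
    exact lex_of_le_of_eqOn_lt fun j hj hpre => tupMultIcc_le_of_eqOn_lt hm
      (fun i hi => hR i (mem_Icc.mp hi).1 (mem_Icc.mp hi).2) hc hj hpre

/-- Let `ν` be a partition of `n ≥ 1` with largest part `ℓ = ν_1` and
exactly `k` nonzero parts, `m ≥ 1`.  With `Q_i = onesFam m (ν'_i)` for `1 ≤ i ≤ ℓ`,
`(Q_1,…,Q_ℓ)` is a closed multiset family tuple, each `Q_i` of shape `(m^{ν'_i})`; its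
type `λ` is defined with conjugate `λ' = ((m-1)n + ν_1, ν_2, …, ν_k)`; and the conjugate
of the defined type of any multiset family tuple of the same shapes is lexicographically
at most `λ'`. -/
theorem stmt_17 (m n k : ℕ) (hm : 1 ≤ m) (hn : 1 ≤ n) (nu : ℕ → ℕ)
    (hmono : ∀ i j : ℕ, 1 ≤ i → i ≤ j → nu j ≤ nu i)
    (hpos : ∀ i : ℕ, 1 ≤ i → i ≤ k → 0 < nu i)
    (hzero : ∀ i : ℕ, k < i → nu i = 0)
    (hsum : (∑ i ∈ Finset.Icc 1 k, nu i) = n) :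
    (∀ i : ℕ, 1 ≤ i → i ≤ nu 1 →
      IsMsetFamily m (nuConj k nu i) (onesFam m (nuConj k nu i)) ∧
      ClosedMsetFam m (onesFam m (nuConj k nu i))) ∧
    TypeDefined (tupMultIcc (nu 1) fun i => onesFam m (nuConj k nu i)) ∧
    (tupMultIcc (nu 1) fun i => onesFam m (nuConj k nu i)) 1 = (m - 1) * n + nu 1 ∧
    (∀ j : ℕ, 2 ≤ j → (tupMultIcc (nu 1) fun i => onesFam m (nuConj k nu i)) j = nu j) ∧
    (∀ R : ℕ → Finset (Multiset ℕ),
      (∀ i : ℕ, 1 ≤ i → i ≤ nu 1 → IsMsetFamily m (nuConj k nu i) (R i)) →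
      TypeDefined (tupMultIcc (nu 1) R) →
      ((∀ i : ℕ, 1 ≤ i →
          tupMultIcc (nu 1) R i = (tupMultIcc (nu 1) fun i => onesFam m (nuConj k nu i)) i) ∨
        ∃ j : ℕ, 1 ≤ j ∧
          tupMultIcc (nu 1) R j < (tupMultIcc (nu 1) fun i => onesFam m (nuConj k nu i)) j ∧
          ∀ i : ℕ, 1 ≤ i → i < j →
            tupMultIcc (nu 1) R i
              = (tupMultIcc (nu 1) fun i => onesFam m (nuConj k nu i)) i)) :=
  stmt_17_general m n k hm nu hmono hzero hsum
end

section
/- Let (Q_1,…,Q_k) be a multiset family tuple with each Q_j of shape (m^{n_j}) and with defined type λ. Then there exists a closed multiset family tuple (Q'_1,…,Q'_k) with each Q'_j of shape (m^{n_j}) whose type μ is defined and satisfies μ ⊴ λ; moreover, if (Q_1,…,Q_k) is not itself closed then μ ⊲ λ. -/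
theorem countP_le_le_iff_lt_getElem {l : List ℕ} (hl : l.Pairwise (· ≤ ·))
    {r : ℕ} (hr : r < l.length) (t : ℕ) : l.countP (· ≤ t) ≤ r ↔ t < l[r] := by
  have hsplit : l = l.take r ++ l[r] :: l.drop (r + 1) := by simp
  generalize l[r] = x at hsplit
  rw [hsplit] at hl ⊢
  have htake : (l.take r).length = r := List.length_take_of_le hr.le
  simp only [List.pairwise_append, List.pairwise_cons, List.mem_cons] at hl
  obtain ⟨-, ⟨hx, -⟩, hle⟩ := hl
  simp only [List.countP_append, List.countP_cons, decide_eq_true_eq]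
  constructor
  · intro h
    by_contra! hxt
    have : (l.take r).countP (· ≤ t) = r := by
      rw [List.countP_eq_length.2 fun a ha => by simpa using (hle a ha x (.inl rfl)).trans hxt,
        htake]
    rw [if_pos hxt] at h
    omega
  · intro htx
    have hdrop : (l.drop (r + 1)).countP (· ≤ t) = 0 :=
      List.countP_eq_zero.2 fun b hb => by simpa using htx.trans_le (hx b hb)
    have := (l.take r).countP_le_length (p := (· ≤ t))
    simp only [hdrop, if_neg htx.not_ge]
    omega

theorem countP_eq_countP_sort (A : Multiset ℕ) (t : ℕ) :
    A.countP (· ≤ t) = (A.sort (· ≤ ·)).countP (· ≤ t) := by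
  conv_lhs => rw [← Multiset.sort_eq A (· ≤ ·)]
  exact Multiset.coe_countP _ _

theorem msetMaj_iff_countP_le {A B : Multiset ℕ} (hcard : Multiset.card A = Multiset.card B) :
    MsetMaj A B ↔ ∀ t, B.countP (· ≤ t) ≤ A.countP (· ≤ t) := by
  have hsA := Multiset.pairwise_sort A (· ≤ ·)
  have hsB := Multiset.pairwise_sort B (· ≤ ·)
  have hlen : (A.sort (· ≤ ·)).length = (B.sort (· ≤ ·)).length := by
    simp [Multiset.length_sort, hcard]
  simp only [MsetMaj, countP_eq_countP_sort A, countP_eq_countP_sort B]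
  constructor
  · intro h t
    by_contra! hlt
    set r := (A.sort (· ≤ ·)).countP (· ≤ t)
    have hrB : r < (B.sort (· ≤ ·)).length := hlt.trans_le List.countP_le_length
    have hrA : r < (A.sort (· ≤ ·)).length := hlen ▸ hrB
    have hAB := h r
    rw [List.getD_eq_getElem _ _ hrA, List.getD_eq_getElem _ _ hrB] at hAB
    have htA := (countP_le_le_iff_lt_getElem hsA hrA t).1 le_rfl
    have := (countP_le_le_iff_lt_getElem hsB hrB t).2 (htA.trans_le hAB)
    omega
  · intro h r
    by_cases hrA : r < (A.sort (· ≤ ·)).length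
    · have hrB : r < (B.sort (· ≤ ·)).length := hlen ▸ hrA
      rw [List.getD_eq_getElem _ _ hrA, List.getD_eq_getElem _ _ hrB]
      by_contra! hlt
      have hA := (countP_le_le_iff_lt_getElem hsA hrA _).2 hlt
      exact lt_irrefl _ ((countP_le_le_iff_lt_getElem hsB hrB _).1 ((h _).trans hA))
    · rw [List.getD_eq_default _ _ (not_lt.1 hrA)]
      exact Nat.zero_le _

theorem countP_replicate (p : ℕ → Prop) [DecidablePred p] (c a : ℕ) :
    (Multiset.replicate c a).countP p = if p a then c else 0 := by
  induction c with
  | zero => simp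
  | succ c ih => rw [Multiset.replicate_succ, Multiset.countP_cons, ih]; split_ifs <;> rfl

theorem countP_le_add_one (S : Multiset ℕ) (t : ℕ) :
    S.countP (· ≤ t + 1) = S.countP (· ≤ t) + S.count (t + 1) := by
  induction S using Multiset.induction_on with
  | empty => simp
  | cons a s ih => simp only [Multiset.countP_cons, Multiset.count_cons, ih]; split_ifs <;> omega

theorem eq_of_countP_le_eq {A B : Multiset ℕ} (h : ∀ t, A.countP (· ≤ t) = B.countP (· ≤ t)) :
    A = B := by
  ext x
  cases x with
  | zero => simpa [Multiset.count, eq_comm] using h 0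
  | succ t =>
    have := countP_le_add_one A t; have := countP_le_add_one B t
    have := h t; have := h (t + 1)
    omega

def lowerMset (i c : ℕ) (S : Multiset ℕ) : Multiset ℕ :=
  S - Multiset.replicate c (i + 1) + Multiset.replicate c i

section lowerMset

variable {i c : ℕ} {S : Multiset ℕ}

theorem card_lowerMset (h : c ≤ S.count (i + 1)) :
    Multiset.card (lowerMset i c S) = Multiset.card S := by
  have h' := Multiset.le_count_iff_replicate_le.1 h
  have := Multiset.card_le_card h'
  simp only [lowerMset, Multiset.card_add, Multiset.card_sub h', Multiset.card_replicate] at this ⊢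
  omega

theorem sum_lowerMset (h : c ≤ S.count (i + 1)) : (lowerMset i c S).sum + c = S.sum := by
  have h' := Multiset.le_count_iff_replicate_le.1 h
  conv_rhs => rw [← tsub_add_cancel_of_le h']
  simp only [lowerMset, Multiset.sum_add, Multiset.sum_replicate, smul_eq_mul]
  ring

theorem countP_le_lowerMset (h : c ≤ S.count (i + 1)) (t : ℕ) :
    (lowerMset i c S).countP (· ≤ t) = S.countP (· ≤ t) + if t = i then c else 0 := by
  have h' := Multiset.le_count_iff_replicate_le.1 h
  have hS := Multiset.countP_add (· ≤ t) (S - Multiset.replicate c (i + 1))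
    (Multiset.replicate c (i + 1))
  rw [tsub_add_cancel_of_le h'] at hS
  rw [lowerMset, Multiset.countP_add, hS, countP_replicate, countP_replicate]
  split_ifs <;> omega

theorem le_count_lowerMset : c ≤ (lowerMset i c S).count i := by
  simp [lowerMset]

theorem one_le_of_mem_lowerMset (hi : 1 ≤ i) (hS : ∀ x ∈ S, 1 ≤ x) :
    ∀ x ∈ lowerMset i c S, 1 ≤ x := by
  intro x hx
  rcases Multiset.mem_add.1 hx with hx | hx
  · exact hS x (Multiset.mem_of_le tsub_le_self hx)
  · exact (Multiset.eq_of_mem_replicate hx).symm ▸ hi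

theorem msetMaj_lowerMset (h : c ≤ S.count (i + 1)) : MsetMaj (lowerMset i c S) S := by
  rw [msetMaj_iff_countP_le (card_lowerMset h)]
  intro t
  rw [countP_le_lowerMset h]
  exact Nat.le_add_right _ _

theorem lowerMset_inj {S' : Multiset ℕ} (h : c ≤ S.count (i + 1)) (h' : c ≤ S'.count (i + 1))
    (heq : lowerMset i c S = lowerMset i c S') : S = S' := by
  have hsub := congrArg (· - Multiset.replicate c i) heq
  simp only [lowerMset, add_tsub_cancel_right] at hsub
  rw [← tsub_add_cancel_of_le (Multiset.le_count_iff_replicate_le.1 h),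
    ← tsub_add_cancel_of_le (Multiset.le_count_iff_replicate_le.1 h'), hsub]

end lowerMset

theorem exists_lowerMset_of_msetMaj {A B : Multiset ℕ} (hcard : Multiset.card A = Multiset.card B)
    (hA : ∀ x ∈ A, 1 ≤ x) (hAB : MsetMaj A B) (hne : A ≠ B) :
    ∃ i, 1 ≤ i ∧ 1 ≤ B.count (i + 1) ∧ MsetMaj A (lowerMset i 1 B) := by
  have hle := (msetMaj_iff_countP_le hcard).1 hAB
  have hbig : ∀ t, B.sum ≤ t → A.countP (· ≤ t) ≤ B.countP (· ≤ t) := fun t ht => by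
    rw [Multiset.countP_eq_card.2 fun b hb => (Multiset.le_sum_of_mem hb).trans ht, ← hcard]
    exact Multiset.countP_le_card _ _
  obtain ⟨t₀, ht₀⟩ : ∃ t, B.countP (· ≤ t) < A.countP (· ≤ t) := by
    by_contra! h
    exact hne (eq_of_countP_le_eq fun t => le_antisymm (h t) (hle t))
  -- at the largest `i` where `B` has fewer elements `≤ i` than `A`, `B` must contain `i + 1`
  set P := fun t => B.countP (· ≤ t) < A.countP (· ≤ t)
  set i := Nat.findGreatest P B.sum
  have hi : B.countP (· ≤ i) < A.countP (· ≤ i) :=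
    Nat.findGreatest_spec (P := P) (not_lt.1 fun h => (hbig t₀ h.le).not_gt ht₀) ht₀
  have hsucc : A.countP (· ≤ i + 1) ≤ B.countP (· ≤ i + 1) := by
    by_cases h : i + 1 ≤ B.sum
    · exact not_lt.1 (Nat.findGreatest_is_greatest (P := P) (Nat.lt_succ_self i) h)
    · exact hbig _ (by omega)
  have hi0 : i ≠ 0 := by
    rintro h
    rw [h, Multiset.countP_eq_zero (s := A).2 fun a ha => by have := hA a ha; omega] at hi
    omega
  have hcount : 1 ≤ B.count (i + 1) := by
    have := countP_le_add_one A i; have := countP_le_add_one B i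
    omega
  refine ⟨i, Nat.one_le_iff_ne_zero.2 hi0, hcount, ?_⟩
  rw [msetMaj_iff_countP_le (hcard.trans (card_lowerMset hcount).symm)]
  intro t
  rw [countP_le_lowerMset hcount]
  split_ifs with ht
  · exact ht ▸ hi
  · exact hle t

theorem closedMsetFam_of_lowerMset_mem {m : ℕ} {Q : Finset (Multiset ℕ)}
    (hQ : ∀ S ∈ Q, Multiset.card S = m)
    (hlow : ∀ B ∈ Q, ∀ i, 1 ≤ i → 1 ≤ B.count (i + 1) → lowerMset i 1 B ∈ Q) :
    ClosedMsetFam m Q := by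
  intro B hB A hAm hA hAB
  induction hs : B.sum using Nat.strong_induction_on generalizing B with
  | _ s ih =>
  obtain rfl | hne := eq_or_ne A B
  · exact hB
  obtain ⟨i, hi, hiB, hAC⟩ := exists_lowerMset_of_msetMaj (hAm.trans (hQ B hB).symm) hA hAB hne
  have := sum_lowerMset hiB
  exact ih _ (by omega) _ (hlow B hB i hi hiB) hAC rfl

theorem msetMult_eq_card_sigma (Q : Finset (Multiset ℕ)) (x : ℕ) :
    msetMult Q x = (Q.sigma fun S => Finset.range (S.count x)).card := by
  simp [msetMult, Finset.card_sigma]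

-- Replacing `d + 1` copies of `i + 1` by `i` injects the pairs `(S, d)` with `d < count (i + 1) S`
-- into the pairs with `d < count i S`.
theorem msetMult_succ_le_of_closedMsetFam {m i : ℕ} {Q : Finset (Multiset ℕ)}
    (hQ : ∀ S ∈ Q, Multiset.card S = m ∧ ∀ x ∈ S, 1 ≤ x) (hcl : ClosedMsetFam m Q) (hi : 1 ≤ i) :
    msetMult Q (i + 1) ≤ msetMult Q i := by
  rw [msetMult_eq_card_sigma, msetMult_eq_card_sigma]
  refine Finset.card_le_card_of_injOn (fun p => ⟨lowerMset i (p.2 + 1) p.1, p.2⟩) ?_ ?_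
  · rintro ⟨S, d⟩ hp
    simp only [Finset.coe_sigma, Set.mem_sigma_iff, Finset.mem_coe, Finset.mem_range] at hp ⊢
    obtain ⟨hS, hd⟩ := hp
    refine ⟨hcl S hS _ ((card_lowerMset hd).trans (hQ S hS).1)
      (one_le_of_mem_lowerMset hi (hQ S hS).2) (msetMaj_lowerMset hd), le_count_lowerMset⟩
  · rintro ⟨S, d⟩ hp ⟨S', d'⟩ hp' heq
    simp only [Finset.coe_sigma, Set.mem_sigma_iff, Finset.mem_coe, Finset.mem_range] at hp hp'
    simp only [Sigma.mk.inj_iff, heq_eq_eq] at heq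
    obtain ⟨hlow, rfl⟩ := heq
    rw [lowerMset_inj hp.2 hp'.2 hlow]

theorem typeDefined_of_closedMsetFam {m k : ℕ} {Q : Fin k → Finset (Multiset ℕ)}
    (hQ : ∀ j, ∀ S ∈ Q j, Multiset.card S = m ∧ ∀ x ∈ S, 1 ≤ x)
    (hcl : ∀ j, ClosedMsetFam m (Q j)) : TypeDefined (msetTupMult Q) := by
  intro i i' hi hii'
  refine antitoneOn_nat_Ici_of_succ_le (fun t ht => ?_) (Set.mem_Ici.2 hi)
    (Set.mem_Ici.2 (hi.trans hii')) hii'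
  exact Finset.sum_le_sum fun j _ => msetMult_succ_le_of_closedMsetFam (hQ j) (hcl j) ht

theorem sum_insert_erase_add {α M : Type*} [DecidableEq α] [AddCommMonoid M] {s : Finset α}
    {a b : α} (ha : a ∈ s) (hb : b ∉ s) (f : α → M) :
    ∑ x ∈ insert b (s.erase a), f x + f a = ∑ x ∈ s, f x + f b := by
  rw [Finset.sum_insert fun h => hb (Finset.mem_of_mem_erase h), add_assoc,
    Finset.sum_erase_add _ _ ha, add_comm]

def msetPrefix (Q : Finset (Multiset ℕ)) (t : ℕ) : ℕ := ∑ S ∈ Q, S.countP (· ≤ t)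

section lowerMove

variable {m n i : ℕ} {Q : Finset (Multiset ℕ)} {B : Multiset ℕ}

theorem isMsetFamily_insert_lowerMset (hQ : IsMsetFamily m n Q) (hB : B ∈ Q) (hi : 1 ≤ i)
    (hiB : 1 ≤ B.count (i + 1)) (hC : lowerMset i 1 B ∉ Q) :
    IsMsetFamily m n (insert (lowerMset i 1 B) (Q.erase B)) := by
  refine ⟨?_, fun S hS => ?_⟩
  · rw [Finset.card_insert_of_notMem fun h => hC (Finset.mem_of_mem_erase h),
      Finset.card_erase_add_one hB, hQ.1]
  · rcases Finset.mem_insert.1 hS with rfl | hS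
    · exact ⟨(card_lowerMset hiB).trans (hQ.2 B hB).1, one_le_of_mem_lowerMset hi (hQ.2 B hB).2⟩
    · exact hQ.2 S (Finset.mem_of_mem_erase hS)

theorem sum_sum_insert_lowerMset_lt (hB : B ∈ Q) (hiB : 1 ≤ B.count (i + 1))
    (hC : lowerMset i 1 B ∉ Q) :
    ∑ S ∈ insert (lowerMset i 1 B) (Q.erase B), S.sum < ∑ S ∈ Q, S.sum := by
  have := sum_insert_erase_add hB hC Multiset.sum
  have := sum_lowerMset hiB
  omega

theorem msetPrefix_insert_lowerMset (hB : B ∈ Q) (hiB : 1 ≤ B.count (i + 1))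
    (hC : lowerMset i 1 B ∉ Q) (t : ℕ) :
    msetPrefix (insert (lowerMset i 1 B) (Q.erase B)) t
      = msetPrefix Q t + if t = i then 1 else 0 := by
  have := sum_insert_erase_add hB hC (·.countP (· ≤ t))
  have := countP_le_lowerMset hiB t
  simp only [msetPrefix] at this ⊢
  omega

end lowerMove

theorem exists_closedMsetFam_msetPrefix_le {m n : ℕ} {Q : Finset (Multiset ℕ)}
    (hQ : IsMsetFamily m n Q) :
    ∃ Q', IsMsetFamily m n Q' ∧ ClosedMsetFam m Q' ∧ (∀ t, msetPrefix Q t ≤ msetPrefix Q' t) ∧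
      (¬ ClosedMsetFam m Q → ∃ t, msetPrefix Q t < msetPrefix Q' t) := by
  induction hw : ∑ S ∈ Q, S.sum using Nat.strong_induction_on generalizing Q with
  | _ w ih =>
  by_cases hcl : ClosedMsetFam m Q
  · exact ⟨Q, hQ, hcl, fun _ => le_rfl, fun h => (h hcl).elim⟩
  obtain ⟨B, hB, i, hi, hiB, hC⟩ :
      ∃ B ∈ Q, ∃ i, 1 ≤ i ∧ 1 ≤ B.count (i + 1) ∧ lowerMset i 1 B ∉ Q := by
    by_contra! h
    exact hcl (closedMsetFam_of_lowerMset_mem (fun S hS => (hQ.2 S hS).1) h)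
  obtain ⟨Q', hQ', hcl', hle, -⟩ := ih _ (hw ▸ sum_sum_insert_lowerMset_lt hB hiB hC)
    (isMsetFamily_insert_lowerMset hQ hB hi hiB hC) rfl
  have hstep := msetPrefix_insert_lowerMset hB hiB hC
  refine ⟨Q', hQ', hcl', fun t => ?_, fun _ => ⟨i, ?_⟩⟩
  · have := hstep t; have := hle t; omega
  · have := hstep i; have := hle i; rw [if_pos rfl] at *; omega

-- If `s` columns of the diagram with column heights `f` have height `≥ j`, its first `j` rows hold
-- `j` boxes of each of them and all boxes of the other columns. For `g`, the first `s` columns give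
-- at most `j` boxes each, and by `hpre` and `htot` the others hold at most as many boxes as for `f`.
theorem conjDom_of_sum_Ioc_le {f g : ℕ → ℕ} {T : ℕ} (hf : TypeDefined f)
    (hfT : Function.support f ⊆ Set.Ioc 0 T) (hgT : Function.support g ⊆ Set.Ioc 0 T)
    (hpre : ∀ t, ∑ x ∈ Finset.Ioc 0 t, f x ≤ ∑ x ∈ Finset.Ioc 0 t, g x)
    (htot : ∑ x ∈ Finset.Ioc 0 T, g x ≤ ∑ x ∈ Finset.Ioc 0 T, f x) :
    ConjDom g f := by
  intro j
  have hpartSum : ∀ h : ℕ → ℕ, Function.support h ⊆ Set.Ioc 0 T →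
      partSum h j = ∑ x ∈ Finset.Ioc 0 T, min (h x) j := fun h hT =>
    finsum_eq_sum_of_support_subset _ fun x hx =>
      by simpa using hT (Function.mem_support.2 fun h0 => hx (by simp [h0]))
  set P := fun x => j ≤ f x
  set s := Nat.findGreatest P T
  have hsT : s ≤ T := Nat.findGreatest_le T
  have hsplit : ∀ h : ℕ → ℕ,
      ∑ x ∈ Finset.Ioc 0 T, h x = ∑ x ∈ Finset.Ioc 0 s, h x + ∑ x ∈ Finset.Ioc s T, h x :=
    fun h => (Finset.sum_Ioc_consecutive h (Nat.zero_le s) hsT).symm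
  have hlow : ∀ x ∈ Finset.Ioc 0 s, j ≤ f x := fun x hx => by
    obtain ⟨hx0, hxs⟩ := Finset.mem_Ioc.1 hx
    exact (Nat.findGreatest_of_ne_zero (P := P) rfl (by omega)).trans (hf x s hx0 hxs)
  have hhigh : ∀ x ∈ Finset.Ioc s T, f x < j := fun x hx =>
    not_le.1 <| Nat.findGreatest_is_greatest (P := P) (Finset.mem_Ioc.1 hx).1 (Finset.mem_Ioc.1 hx).2
  have hcard : ∑ _x ∈ Finset.Ioc 0 s, j = s * j := by simp
  have hf_eq : partSum f j = s * j + ∑ x ∈ Finset.Ioc s T, f x := by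
    rw [hpartSum f hfT, hsplit, ← hcard,
      Finset.sum_congr rfl fun x hx => min_eq_right (hlow x hx),
      Finset.sum_congr rfl fun x hx => min_eq_left (hhigh x hx).le]
  have hg_le : partSum g j ≤ s * j + ∑ x ∈ Finset.Ioc s T, g x := by
    rw [hpartSum g hgT, hsplit, ← hcard]
    exact add_le_add (Finset.sum_le_sum fun _ _ => min_le_right _ _)
      (Finset.sum_le_sum fun _ _ => min_le_left _ _)
  have htail : ∑ x ∈ Finset.Ioc s T, g x ≤ ∑ x ∈ Finset.Ioc s T, f x := by
    have := hsplit f; have := hsplit g; have := hpre s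
    omega
  omega

theorem sum_Ioc_count {S : Multiset ℕ} (hS : ∀ x ∈ S, 1 ≤ x) (t : ℕ) :
    ∑ x ∈ Finset.Ioc 0 t, S.count x = S.countP (· ≤ t) := by
  rw [Multiset.countP_eq_card_filter, ← Multiset.sum_count_eq_card fun a ha => by
    obtain ⟨haS, hat⟩ := Multiset.mem_filter.1 ha
    exact Finset.mem_Ioc.2 ⟨hS a haS, hat⟩]
  exact Finset.sum_congr rfl fun x hx => by
    rw [Multiset.count_filter, if_pos (Finset.mem_Ioc.1 hx).2]

theorem sum_Ioc_msetTupMult {k : ℕ} {Q : Fin k → Finset (Multiset ℕ)}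
    (hQ : ∀ j, ∀ S ∈ Q j, ∀ x ∈ S, 1 ≤ x) (t : ℕ) :
    ∑ x ∈ Finset.Ioc 0 t, msetTupMult Q x = ∑ j, msetPrefix (Q j) t := by
  simp only [msetTupMult, msetMult, msetPrefix]
  rw [Finset.sum_comm]
  refine Finset.sum_congr rfl fun j _ => ?_
  rw [Finset.sum_comm]
  exact Finset.sum_congr rfl fun S hS => sum_Ioc_count (hQ j S hS) t

theorem msetPrefix_eq_of_le {m n T : ℕ} {Q : Finset (Multiset ℕ)} (hQ : IsMsetFamily m n Q)
    (hT : ∀ S ∈ Q, ∀ x ∈ S, x ≤ T) : msetPrefix Q T = n * m := by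
  rw [msetPrefix, Finset.sum_congr rfl fun S hS =>
      (Multiset.countP_eq_card.2 (hT S hS)).trans (hQ.2 S hS).1,
    Finset.sum_const, hQ.1, smul_eq_mul]

theorem support_msetTupMult_subset {k T : ℕ} {Q : Fin k → Finset (Multiset ℕ)}
    (hpos : ∀ j, ∀ S ∈ Q j, ∀ x ∈ S, 1 ≤ x) (hT : ∀ j, ∀ S ∈ Q j, ∀ x ∈ S, x ≤ T) :
    Function.support (msetTupMult Q) ⊆ Set.Ioc 0 T := by
  intro x hx
  by_contra hxT
  refine hx <| Finset.sum_eq_zero fun j _ => Finset.sum_eq_zero fun S hS =>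
    Multiset.count_eq_zero.2 fun hxS => hxT ⟨hpos j S hS x hxS, hT j S hS x hxS⟩

theorem exists_forall_le_of_mem {k : ℕ} (Q : Fin k → Finset (Multiset ℕ)) :
    ∃ T, ∀ j, ∀ S ∈ Q j, ∀ x ∈ S, x ≤ T :=
  ⟨∑ j, ∑ S ∈ Q j, S.sum, fun j _ hS _ hx => (Multiset.le_sum_of_mem hx).trans <|
    (Finset.single_le_sum (fun _ _ => Nat.zero_le _) hS).trans <|
      Finset.single_le_sum (f := fun j => ∑ S ∈ Q j, S.sum) (fun _ _ => Nat.zero_le _)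
        (Finset.mem_univ j)⟩

theorem conjDom_of_msetPrefix_le {m k : ℕ} {n : Fin k → ℕ} {Q Q' : Fin k → Finset (Multiset ℕ)}
    (hQ : ∀ j, IsMsetFamily m (n j) (Q j)) (hQ' : ∀ j, IsMsetFamily m (n j) (Q' j))
    (htype : TypeDefined (msetTupMult Q))
    (hle : ∀ j t, msetPrefix (Q j) t ≤ msetPrefix (Q' j) t) :
    ConjDom (msetTupMult Q') (msetTupMult Q) := by
  have hpos : ∀ j, ∀ S ∈ Q j, ∀ x ∈ S, 1 ≤ x := fun j S hS => ((hQ j).2 S hS).2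
  have hpos' : ∀ j, ∀ S ∈ Q' j, ∀ x ∈ S, 1 ≤ x := fun j S hS => ((hQ' j).2 S hS).2
  obtain ⟨T₁, hT₁⟩ := exists_forall_le_of_mem Q
  obtain ⟨T₂, hT₂⟩ := exists_forall_le_of_mem Q'
  have hT : ∀ j, ∀ S ∈ Q j, ∀ x ∈ S, x ≤ max T₁ T₂ := fun j S hS x hx =>
    le_max_of_le_left (hT₁ j S hS x hx)
  have hT' : ∀ j, ∀ S ∈ Q' j, ∀ x ∈ S, x ≤ max T₁ T₂ := fun j S hS x hx =>
    le_max_of_le_right (hT₂ j S hS x hx)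
  refine conjDom_of_sum_Ioc_le htype (support_msetTupMult_subset hpos hT)
    (support_msetTupMult_subset hpos' hT') (fun t => ?_) ?_
  all_goals rw [sum_Ioc_msetTupMult hpos, sum_Ioc_msetTupMult hpos']
  · exact Finset.sum_le_sum fun j _ => hle j t
  · exact (Finset.sum_congr rfl fun j _ => by
      rw [msetPrefix_eq_of_le (hQ' j) (hT' j), msetPrefix_eq_of_le (hQ j) (hT j)]).le

/-- Any multiset family tuple with defined type can be replaced by a closed
one whose type is dominated by the original; strictly so if the original is not closed. -/
theorem stmt_19 (m k : ℕ) (n : Fin k → ℕ) (Q : Fin k → Finset (Multiset ℕ))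
    (hQ : ∀ j, IsMsetFamily m (n j) (Q j))
    (htype : TypeDefined (msetTupMult Q)) :
    ∃ Q' : Fin k → Finset (Multiset ℕ),
      (∀ j, IsMsetFamily m (n j) (Q' j)) ∧
      (∀ j, ClosedMsetFam m (Q' j)) ∧
      TypeDefined (msetTupMult Q') ∧
      ConjDom (msetTupMult Q') (msetTupMult Q) ∧
      (¬ (∀ j, ClosedMsetFam m (Q j)) → ConjStrictDom (msetTupMult Q') (msetTupMult Q)) := by
  choose Q' hQ' hcl hle hlt using fun j => exists_closedMsetFam_msetPrefix_le (hQ j)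
  have hdom := conjDom_of_msetPrefix_le hQ hQ' htype hle
  refine ⟨Q', hQ', hcl, typeDefined_of_closedMsetFam (fun j => (hQ' j).2) hcl, hdom,
    fun hnc => ⟨hdom, ?_⟩⟩
  obtain ⟨j, hj⟩ := not_forall.1 hnc
  obtain ⟨t, ht⟩ := hlt j hj
  have hsum :
      ∑ x ∈ Finset.Ioc 0 t, msetTupMult Q x < ∑ x ∈ Finset.Ioc 0 t, msetTupMult Q' x := by
    rw [sum_Ioc_msetTupMult (fun j S hS => ((hQ j).2 S hS).2),
      sum_Ioc_msetTupMult (fun j S hS => ((hQ' j).2 S hS).2)]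
    exact Finset.sum_lt_sum (fun j _ => hle j t) ⟨j, Finset.mem_univ j, ht⟩
  by_contra! h
  exact hsum.ne (Finset.sum_congr rfl fun x hx => (h x (Finset.mem_Ioc.1 hx).1).symm)
end
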